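/- (Proposition 4, case D≥3) Let D ≥ 3 and let R^{pk} be a smooth symmetric tensor field on ℝ^D. Then ∂_k∂_p R^{pk} = 0 if and only if there exists a smooth tensor field S^{pkr} on ℝ^D, antisymmetric in its last two indices (S^{pkr} = −S^{prk}), such that R^{pk} = ∂_r S^{(pk)r} (sum over r), where S^{(pk)r} = (1/2)(S^{pkr} + S^{kpr}). -/

import Mathlib

/-!
Write `J_p = ∂_k R^{pk}`; the hypothesis says that `J` is divergence free.

A smooth divergence-free field `v` is the divergence `v_k = ∂_r A^{kr}` of an antisymmetric `A`.
Integrating in `x_i` from the hyperplane `x_i = 0` gives `u` with `∂_i u_k = v_k`, whose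
divergence is `v_i` restricted to that hyperplane, a function `g` independent of `x_i`;
subtracting the primitive of `g` in a second coordinate `x_j` from `u_j` makes `u`
divergence free, and then `A^{kr} = δ_{ri} u_k - δ_{ki} u_r` works.

Then `J_p = ∂_r A^{pr}`; let `∂_i Q = A`. Since a double divergence of an antisymmetric
tensor vanishes, `S₀^{kpr} = 2 δ_{ki} Q^{pr}` satisfies `∂_k ∂_r S₀^{(pk)r} = ∂_i ∂_r Q^{pr} = J_p`.
Hence `R - ∂_r S₀^{(pk)r}` is symmetric with divergence-free rows, and the antisymmetric
potentials of its rows supply the rest of `S`. The converse is again the vanishing of double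
divergences of antisymmetric tensors.
-/

/-- Partial derivative in the k-th Cartesian coordinate direction on ℝ^D. -/
noncomputable def pd {D : ℕ} (k : Fin D) (f : (Fin D → ℝ) → ℝ) : (Fin D → ℝ) → ℝ :=
  fun x => fderiv ℝ f x (Pi.single k 1)

open Function
open scoped ContDiff

section ParametricIntegral

variable {E F : Type*} [NormedAddCommGroup E] [NormedSpace ℝ E] [FiniteDimensional ℝ E]
  [NormedAddCommGroup F] [NormedSpace ℝ F]

theorem hasFDerivAt_intervalIntegral_of_contDiff {g : E × ℝ → F} (hg : ContDiff ℝ 1 g)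
    (a b : ℝ) (x₀ : E) :
    HasFDerivAt (fun x => ∫ t in a..b, g (x, t))
      (∫ t in a..b, (fderiv ℝ g (x₀, t)).comp (ContinuousLinearMap.inl ℝ E ℝ)) x₀ := by
  have hg' : Continuous fun p => (fderiv ℝ g p).comp (ContinuousLinearMap.inl ℝ E ℝ) :=
    (hg.continuous_fderiv one_ne_zero).clm_comp continuous_const
  have hslice : ∀ x : E, Continuous fun t : ℝ => (x, t) :=
    fun x => continuous_const.prodMk continuous_id
  obtain ⟨M, hM⟩ := ((isCompact_closedBall x₀ 1).prod isCompact_uIcc).exists_bound_of_continuousOn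
    hg'.continuousOn
  refine intervalIntegral.hasFDerivAt_integral_of_dominated_of_fderiv_le (bound := fun _ => M)
    (F' := fun x t => (fderiv ℝ g (x, t)).comp (ContinuousLinearMap.inl ℝ E ℝ))
    (Metric.ball_mem_nhds x₀ one_pos) ?_ ((hg.continuous.comp (hslice x₀)).intervalIntegrable a b)
    (hg'.comp (hslice x₀)).aestronglyMeasurable ?_ intervalIntegrable_const ?_
  · exact .of_forall fun x => (hg.continuous.comp (hslice x)).aestronglyMeasurable
  · exact .of_forall fun t ht x hx =>
      hM (x, t) ⟨Metric.ball_subset_closedBall hx, Set.uIoc_subset_uIcc ht⟩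
  · exact .of_forall fun t _ x _ =>
      ((hg.differentiable one_ne_zero) (x, t)).hasFDerivAt.comp x (hasFDerivAt_prodMk_left x t)

theorem contDiff_intervalIntegral {n : ℕ} {g : E × ℝ → F} (hg : ContDiff ℝ n g) (a b : ℝ) :
    ContDiff ℝ n fun x => ∫ t in a..b, g (x, t) := by
  induction n generalizing g with
  | zero =>
    exact contDiff_zero.2 <| intervalIntegral.continuous_parametric_intervalIntegral_of_continuous'
      (f := fun x t => g (x, t)) (contDiff_zero.1 hg) a b
  | succ n ih =>
    have hg1 : ContDiff ℝ 1 g := hg.of_le (by exact_mod_cast Nat.le_add_left 1 n)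
    have hderiv : ∀ v, (fun x => fderiv ℝ (fun x => ∫ t in a..b, g (x, t)) x v)
        = fun x => ∫ t in a..b, fderiv ℝ g (x, t) (v, 0) := fun v => funext fun x => by
      rw [(hasFDerivAt_intervalIntegral_of_contDiff hg1 a b x).fderiv,
        ContinuousLinearMap.intervalIntegral_apply]
      · rfl
      · exact (((hg1.continuous_fderiv one_ne_zero).comp
          (continuous_const.prodMk continuous_id)).clm_comp continuous_const).intervalIntegrable a b
    rw [Nat.cast_succ, contDiff_succ_iff_fderiv_apply]
    refine ⟨fun x => (hasFDerivAt_intervalIntegral_of_contDiff hg1 a b x).differentiableAt,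
      by simp, fun v => ?_⟩
    rw [hderiv]
    exact ih ((hg.fderiv_right le_rfl).clm_apply contDiff_const)

end ParametricIntegral

theorem ContDiff.update {𝕜 E F ι : Type*} [NontriviallyNormedField 𝕜] [NormedAddCommGroup E]
    [NormedSpace 𝕜 E] [NormedAddCommGroup F] [NormedSpace 𝕜 F] [Fintype ι] [DecidableEq ι]
    {n : WithTop ℕ∞} {f : E → ι → F} {g : E → F} (hf : ContDiff 𝕜 n f) (i : ι)
    (hg : ContDiff 𝕜 n g) : ContDiff 𝕜 n fun x => update (f x) i (g x) := by
  refine contDiff_pi.2 fun k => ?_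
  rcases eq_or_ne k i with rfl | hk
  · simpa using hg
  · simpa [update_of_ne hk] using contDiff_pi.1 hf k

section PartialDerivative

variable {D : ℕ} {f g : (Fin D → ℝ) → ℝ} {x : Fin D → ℝ}

theorem pd_add (hf : DifferentiableAt ℝ f x) (hg : DifferentiableAt ℝ g x) (k : Fin D) :
    pd k (fun y => f y + g y) x = pd k f x + pd k g x := by
  simp only [pd, fderiv_fun_add hf hg]
  rfl

theorem pd_sub (hf : DifferentiableAt ℝ f x) (hg : DifferentiableAt ℝ g x) (k : Fin D) :
    pd k (fun y => f y - g y) x = pd k f x - pd k g x := by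
  simp only [pd, fderiv_fun_sub hf hg]
  rfl

theorem pd_neg (k : Fin D) : pd k (fun y => -f y) x = -pd k f x := by
  simp only [pd, fderiv_fun_neg]
  rfl

theorem pd_const_mul (hf : DifferentiableAt ℝ f x) (c : ℝ) (k : Fin D) :
    pd k (fun y => c * f y) x = c * pd k f x := by
  simp only [pd, fderiv_const_mul hf]
  rfl

theorem pd_sum {ι : Type*} {s : Finset ι} {f : ι → (Fin D → ℝ) → ℝ}
    (hf : ∀ i ∈ s, DifferentiableAt ℝ (f i) x) (k : Fin D) :
    pd k (fun y => ∑ i ∈ s, f i y) x = ∑ i ∈ s, pd k (f i) x := by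
  simp [pd, fderiv_fun_sum hf]

theorem contDiff_pd (hf : ContDiff ℝ ∞ f) (k : Fin D) : ContDiff ℝ ∞ (pd k f) :=
  (contDiff_infty_iff_fderiv.1 hf).2.clm_apply contDiff_const

theorem ContDiff.differentiable_pd (hf : ContDiff ℝ 2 f) (k : Fin D) :
    Differentiable ℝ (pd k f) :=
  ((hf.fderiv_right (m := 1) le_rfl).clm_apply contDiff_const).differentiable one_ne_zero

theorem pd_comm (hf : ContDiff ℝ 2 f) (a b : Fin D) (x : Fin D → ℝ) :
    pd a (pd b f) x = pd b (pd a f) x := by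
  have hdf : Differentiable ℝ (fderiv ℝ f) :=
    (hf.fderiv_right (m := 1) le_rfl).differentiable one_ne_zero
  have hsecond : ∀ v w : Fin D → ℝ,
      fderiv ℝ (fun y => fderiv ℝ f y v) x w = fderiv ℝ (fderiv ℝ f) x w v := fun v w => by
    rw [fderiv_clm_apply (hdf x) (differentiableAt_const v)]
    simp
  unfold pd
  rw [hsecond, hsecond]
  exact hf.contDiffAt.isSymmSndFDerivAt (by simp) _ _

theorem hasDerivAt_comp_update {k : Fin D} {t : ℝ} (hf : DifferentiableAt ℝ f (update x k t)) :
    HasDerivAt (fun s => f (update x k s)) (pd k f (update x k t)) t :=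
  hf.hasFDerivAt.comp_hasDerivAt t (hasDerivAt_update x k t)

theorem pd_eq_zero_of_update_eq {k : Fin D} (h : ∀ t, f (update x k t) = f x) :
    pd k f x = 0 := by
  by_cases hf : DifferentiableAt ℝ f x
  · have hline := hasDerivAt_comp_update (k := k) (t := x k) (by rwa [update_eq_self])
    rw [funext h, update_eq_self] at hline
    exact hline.unique (hasDerivAt_const _ _)
  · simp [pd, fderiv_zero_of_not_differentiableAt hf]

end PartialDerivative

section Divergence

variable {D : ℕ} {v w : Fin D → (Fin D → ℝ) → ℝ}

noncomputable def divergence (v : Fin D → (Fin D → ℝ) → ℝ) : (Fin D → ℝ) → ℝ :=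
  fun x => ∑ k, pd k (v k) x

theorem contDiff_divergence (hv : ∀ k, ContDiff ℝ ∞ (v k)) : ContDiff ℝ ∞ (divergence v) :=
  ContDiff.sum fun k _ => contDiff_pd (hv k) k

theorem divergence_neg (v : Fin D → (Fin D → ℝ) → ℝ) :
    divergence (fun k y => -v k y) = fun y => -divergence v y := by
  funext y
  simp [divergence, pd_neg]

theorem divergence_add (hv : ∀ k, Differentiable ℝ (v k)) (hw : ∀ k, Differentiable ℝ (w k)) :
    divergence (fun k y => v k y + w k y) = fun y => divergence v y + divergence w y := by
  funext y
  simp [divergence, pd_add (hv _ y) (hw _ y), Finset.sum_add_distrib]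

theorem divergence_sub (hv : ∀ k, Differentiable ℝ (v k)) (hw : ∀ k, Differentiable ℝ (w k)) :
    divergence (fun k y => v k y - w k y) = fun y => divergence v y - divergence w y := by
  funext y
  simp [divergence, pd_sub (hv _ y) (hw _ y), Finset.sum_sub_distrib]

theorem divergence_const_mul (hv : ∀ k, Differentiable ℝ (v k)) (c : ℝ) :
    divergence (fun k y => c * v k y) = fun y => c * divergence v y := by
  funext y
  simp [divergence, pd_const_mul (hv _ y), Finset.mul_sum]

theorem divergence_ite_mul {f : (Fin D → ℝ) → ℝ} (hf : Differentiable ℝ f) (i : Fin D) (c : ℝ) :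
    divergence (fun k y => (if k = i then c else 0) * f y) = fun y => c * pd i f y := by
  funext y
  change ∑ k, pd k (fun y => (if k = i then c else 0) * f y) y = _
  simp only [pd_const_mul (hf y)]
  simp

theorem pd_divergence (hv : ∀ k, ContDiff ℝ 2 (v k)) (j : Fin D) (x : Fin D → ℝ) :
    pd j (divergence v) x = divergence (fun k => pd j (v k)) x := by
  change pd j (fun y => ∑ k, pd k (v k) y) x = _
  rw [pd_sum fun k _ => (hv k).differentiable_pd k x]
  exact Finset.sum_congr rfl fun k _ => pd_comm (hv k) j k x

theorem divergence_divergence_apply {T : Fin D → Fin D → (Fin D → ℝ) → ℝ}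
    (hT : ∀ p k, ContDiff ℝ 2 (T p k)) (x : Fin D → ℝ) :
    divergence (fun k => divergence fun p => T p k) x = ∑ k, ∑ p, pd k (pd p (T p k)) x :=
  Finset.sum_congr rfl fun k _ => pd_sum (fun p _ => (hT p k).differentiable_pd p x) k

theorem divergence_divergence_comm {T : Fin D → Fin D → (Fin D → ℝ) → ℝ}
    (hT : ∀ p k, ContDiff ℝ 2 (T p k)) :
    divergence (fun k => divergence fun p => T p k) = divergence fun p => divergence (T p) := by
  funext x
  rw [divergence_divergence_apply hT, divergence_divergence_apply (T := fun k p => T p k)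
    (fun k p => hT p k), Finset.sum_comm]
  exact Finset.sum_congr rfl fun p _ => Finset.sum_congr rfl fun k _ => pd_comm (hT p k) k p x

theorem divergence_divergence_eq_zero_of_antisymm {T : Fin D → Fin D → (Fin D → ℝ) → ℝ}
    (hT : ∀ k r, ContDiff ℝ 2 (T k r)) (hanti : ∀ k r y, T k r y = -T r k y) :
    divergence (fun k => divergence (T k)) = 0 := by
  have hswap : divergence (fun k => divergence (T k))
      = fun y => -divergence (fun k => divergence (T k)) y :=
    calc divergence (fun k => divergence (T k))
        = divergence fun r => divergence fun k => T k r :=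
          divergence_divergence_comm fun r k => hT k r
      _ = divergence fun r => divergence fun k y => -T r k y := by simp only [← hanti]
      _ = fun y => -divergence (fun k => divergence (T k)) y := by simp only [divergence_neg]
  funext y
  have := congrFun hswap y
  simp only [Pi.zero_apply]
  linarith

end Divergence

section Primitive

variable {D : ℕ} {f : (Fin D → ℝ) → ℝ} {x : Fin D → ℝ}

noncomputable def prim (j : Fin D) (f : (Fin D → ℝ) → ℝ) (x : Fin D → ℝ) : ℝ :=
  ∫ t in (0 : ℝ)..x j, f (update x j t)

theorem prim_eq_mul_integral (j : Fin D) (f : (Fin D → ℝ) → ℝ) (x : Fin D → ℝ) :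
    prim j f x = x j * ∫ s in (0 : ℝ)..1, f (update x j (x j * s)) := by
  rw [prim, intervalIntegral.mul_integral_comp_mul_left (f := fun t => f (update x j t)),
    mul_zero, mul_one]

theorem contDiff_prim (hf : ContDiff ℝ ∞ f) (j : Fin D) : ContDiff ℝ ∞ (prim j f) := by
  have hpath : ContDiff ℝ ∞ fun p : (Fin D → ℝ) × ℝ => update p.1 j (p.1 j * p.2) :=
    contDiff_fst.update j (((contDiff_apply ℝ ℝ j).comp contDiff_fst).mul contDiff_snd)
  have hint : ContDiff ℝ ∞ fun x : Fin D → ℝ => ∫ s in (0 : ℝ)..1, f (update x j (x j * s)) :=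
    contDiff_infty.2 fun n => contDiff_intervalIntegral (contDiff_infty.1 (hf.comp hpath) n) 0 1
  rw [funext (prim_eq_mul_integral j f)]
  exact (contDiff_apply ℝ ℝ j).mul hint

theorem prim_of_apply_eq_zero {j : Fin D} (hx : x j = 0) : prim j f x = 0 := by
  simp [prim, hx]

theorem prim_zero (j : Fin D) : prim j (fun _ => 0) x = 0 := by
  simp [prim]

theorem prim_neg (j : Fin D) : prim j (fun y => -f y) x = -prim j f x := by
  simp [prim, intervalIntegral.integral_neg]

theorem prim_sum {ι : Type*} {s : Finset ι} {f : ι → (Fin D → ℝ) → ℝ}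
    (hf : ∀ i ∈ s, Continuous (f i)) (j : Fin D) :
    prim j (fun y => ∑ i ∈ s, f i y) x = ∑ i ∈ s, prim j (f i) x :=
  intervalIntegral.integral_finsetSum fun i hi =>
    ((hf i hi).comp (continuous_const.update j continuous_id)).intervalIntegrable _ _

theorem pd_prim_self (hf : ContDiff ℝ ∞ f) (j : Fin D) (x : Fin D → ℝ) :
    pd j (prim j f) x = f x := by
  have hline : HasDerivAt (fun t => ∫ τ in (0 : ℝ)..t, f (update x j τ)) (pd j (prim j f) x)
      (x j) := by
    simpa [prim] using hasDerivAt_comp_update (k := j) (t := x j)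
      ((contDiff_prim hf j).differentiable (by simp) (update x j (x j)))
  have hcont : Continuous fun t => f (update x j t) :=
    hf.continuous.comp (continuous_const.update j continuous_id)
  simpa using hline.unique (hcont.integral_hasStrictDerivAt 0 (x j)).hasDerivAt

theorem prim_pd_self (hf : ContDiff ℝ 1 f) (j : Fin D) (x : Fin D → ℝ) :
    prim j (pd j f) x = f x - f (update x j 0) := by
  have hcont : Continuous (pd j f) :=
    (hf.continuous_fderiv one_ne_zero).clm_apply continuous_const
  rw [prim, intervalIntegral.integral_eq_sub_of_hasDerivAt
    (fun t _ => hasDerivAt_comp_update (hf.differentiable one_ne_zero _))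
    ((hcont.comp (continuous_const.update j continuous_id)).intervalIntegrable _ _),
    update_eq_self]

theorem apply_eq_apply_update_of_pd_eq_zero (hf : ContDiff ℝ 1 f) {j : Fin D}
    (h : ∀ y, pd j f y = 0) (x : Fin D → ℝ) : f x = f (update x j 0) := by
  have := prim_pd_self hf j x
  rw [funext h, prim_zero] at this
  linarith

theorem pd_prim_of_ne (hf : ContDiff ℝ ∞ f) {r j : Fin D} (hrj : r ≠ j) (x : Fin D → ℝ) :
    pd r (prim j f) x = prim j (pd r f) x := by
  -- `h` has vanishing `∂_j` and vanishes on the hyperplane `x_j = 0`, hence everywhere.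
  set h : (Fin D → ℝ) → ℝ := fun y => pd r (prim j f) y - prim j (pd r f) y
  have hF : ContDiff ℝ ∞ (pd r (prim j f)) := contDiff_pd (contDiff_prim hf j) r
  have hG : ContDiff ℝ ∞ (prim j (pd r f)) := contDiff_prim (contDiff_pd hf r) j
  have hpd : ∀ y, pd j h y = 0 := fun y => by
    rw [pd_sub (hF.differentiable (by simp) y) (hG.differentiable (by simp) y),
      pd_comm (contDiff_infty.1 (contDiff_prim hf j) 2), funext (pd_prim_self hf j),
      pd_prim_self (contDiff_pd hf r), sub_self]
  have hx : update x j 0 j = 0 := update_self j 0 x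
  have hvanish : h (update x j 0) = 0 := by
    change pd r (prim j f) (update x j 0) - prim j (pd r f) (update x j 0) = 0
    rw [prim_of_apply_eq_zero hx, sub_zero]
    refine pd_eq_zero_of_update_eq fun t => ?_
    rw [prim_of_apply_eq_zero hx, prim_of_apply_eq_zero (by rwa [update_of_ne hrj.symm])]
  have := apply_eq_apply_update_of_pd_eq_zero (f := h) (contDiff_infty.1 (hF.sub hG) 1) hpd x
  rw [hvanish] at this
  exact sub_eq_zero.1 this

end Primitive

section Potential

variable {D : ℕ} {v : Fin D → (Fin D → ℝ) → ℝ}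

theorem divergence_prim (hv : ∀ k, ContDiff ℝ ∞ (v k)) (i : Fin D) (x : Fin D → ℝ) :
    divergence (fun r => prim i (v r)) x = prim i (divergence v) x + v i (update x i 0) := by
  have hterm : ∀ r, pd r (prim i (v r)) x
      = prim i (pd r (v r)) x + if r = i then v i (update x i 0) else 0 := by
    intro r
    rcases eq_or_ne r i with rfl | hri
    · rw [pd_prim_self (hv r), prim_pd_self (contDiff_infty.1 (hv r) 1)]
      simp
    · rw [pd_prim_of_ne (hv r) hri, if_neg hri, add_zero]
  change ∑ r, pd r (prim i (v r)) x = prim i (fun y => ∑ r, pd r (v r) y) x + _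
  rw [prim_sum fun r _ => (contDiff_pd (hv r) r).continuous,
    Finset.sum_congr rfl fun r _ => hterm r, Finset.sum_add_distrib]
  simp

theorem exists_pd_eq_and_divergence_eq_zero {i j : Fin D} (hij : i ≠ j)
    (hv : ∀ k, ContDiff ℝ ∞ (v k)) (hdiv : divergence v = 0) :
    ∃ u : Fin D → (Fin D → ℝ) → ℝ,
      (∀ k, ContDiff ℝ ∞ (u k)) ∧ (∀ k, pd i (u k) = v k) ∧ divergence u = 0 := by
  set g : (Fin D → ℝ) → ℝ := fun y => v i (update y i 0)
  have hg : ContDiff ℝ ∞ g := (hv i).comp (contDiff_id.update i contDiff_const)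
  have hP : ∀ k, ContDiff ℝ ∞ (prim i (v k)) := fun k => contDiff_prim (hv k) i
  have hG : ContDiff ℝ ∞ (prim j g) := contDiff_prim hg j
  have hpd_G : ∀ y, pd i (prim j g) y = 0 := fun y => by
    have hgi : pd i g = fun _ => 0 :=
      funext fun y => pd_eq_zero_of_update_eq fun t => by simp [g]
    rw [pd_prim_of_ne hg hij, hgi, prim_zero]
  refine ⟨fun k y => prim i (v k) y - (if k = j then 1 else 0) * prim j g y,
    fun k => (hP k).sub (contDiff_const.mul hG), fun k => funext fun y => ?_, ?_⟩
  · rw [pd_sub ((hP k).differentiable (by simp) y)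
      ((hG.differentiable (by simp)).const_mul _ y),
      pd_const_mul (hG.differentiable (by simp) y), pd_prim_self (hv k), hpd_G, mul_zero, sub_zero]
  · rw [divergence_sub (fun k => (hP k).differentiable (by simp))
      (fun k => (hG.differentiable (by simp)).const_mul _),
      divergence_ite_mul (hG.differentiable (by simp))]
    funext x
    simp only [divergence_prim hv, hdiv, one_mul, pd_prim_self hg]
    simp [prim, g]

theorem exists_antisymm_divergence_eq {i j : Fin D} (hij : i ≠ j)
    (hv : ∀ k, ContDiff ℝ ∞ (v k)) (hdiv : divergence v = 0) :
    ∃ A : Fin D → Fin D → (Fin D → ℝ) → ℝ, (∀ k r, ContDiff ℝ ∞ (A k r)) ∧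
      (∀ k r y, A k r y = -A r k y) ∧ ∀ k, divergence (A k) = v k := by
  obtain ⟨u, hu, hpd_u, hdiv_u⟩ := exists_pd_eq_and_divergence_eq_zero hij hv hdiv
  have hdu : ∀ k, Differentiable ℝ (u k) := fun k => (hu k).differentiable (by simp)
  refine ⟨fun k r y => (if r = i then 1 else 0) * u k y - (if k = i then 1 else 0) * u r y,
    fun k r => (contDiff_const.mul (hu k)).sub (contDiff_const.mul (hu r)),
    fun k r y => by ring, fun k => ?_⟩
  rw [divergence_sub (fun r => (hdu k).const_mul _) (fun r => (hdu r).const_mul _),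
    divergence_ite_mul (hdu k), divergence_const_mul hdu, hdiv_u, hpd_u]
  funext y
  simp

end Potential

section SymmetrizedDivergence

variable {D : ℕ} {S : Fin D → Fin D → Fin D → (Fin D → ℝ) → ℝ}

noncomputable def symDivergence (S : Fin D → Fin D → Fin D → (Fin D → ℝ) → ℝ) (p k : Fin D) :
    (Fin D → ℝ) → ℝ :=
  divergence fun r y => (1 / 2 : ℝ) * (S p k r y + S k p r y)

theorem symDivergence_comm (S : Fin D → Fin D → Fin D → (Fin D → ℝ) → ℝ) (p k : Fin D) :
    symDivergence S p k = symDivergence S k p := by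
  simp only [symDivergence, add_comm]

theorem symDivergence_eq (hS : ∀ p k r, Differentiable ℝ (S p k r)) (p k : Fin D) :
    symDivergence S p k
      = fun y => (1 / 2 : ℝ) * (divergence (S p k) y + divergence (S k p) y) := by
  rw [symDivergence, divergence_const_mul (v := fun r y => S p k r y + S k p r y)
    fun r => (hS p k r).add (hS k p r), divergence_add (hS p k) (hS k p)]

theorem contDiff_symDivergence (hS : ∀ p k r, ContDiff ℝ ∞ (S p k r)) (p k : Fin D) :
    ContDiff ℝ ∞ (symDivergence S p k) :=
  contDiff_divergence fun r => contDiff_const.mul ((hS p k r).add (hS k p r))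

theorem symDivergence_add {S' : Fin D → Fin D → Fin D → (Fin D → ℝ) → ℝ}
    (hS : ∀ p k r, Differentiable ℝ (S p k r)) (hS' : ∀ p k r, Differentiable ℝ (S' p k r))
    (p k : Fin D) :
    symDivergence (fun p k r y => S p k r y + S' p k r y) p k
      = fun y => symDivergence S p k y + symDivergence S' p k y := by
  rw [symDivergence_eq (S := fun p k r y => S p k r y + S' p k r y)
    fun p k r => (hS p k r).add (hS' p k r), symDivergence_eq hS, symDivergence_eq hS',
    divergence_add (hS p k) (hS' p k), divergence_add (hS k p) (hS' k p)]
  funext y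
  ring

theorem divergence_symDivergence (hS : ∀ p k r, ContDiff ℝ ∞ (S p k r))
    (hanti : ∀ p k r y, S p k r y = -S p r k y) (p : Fin D) :
    divergence (fun k => symDivergence S p k)
      = fun y => (1 / 2 : ℝ) * divergence (fun k => divergence (S k p)) y := by
  have hdiv : ∀ p k, Differentiable ℝ (divergence (S p k)) :=
    fun p k => (contDiff_divergence (hS p k)).differentiable (by simp)
  simp only [symDivergence_eq fun p k r => (hS p k r).differentiable (by simp)]
  rw [divergence_const_mul (v := fun k y => divergence (S p k) y + divergence (S k p) y)
      fun k => (hdiv p k).add (hdiv k p),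
    divergence_add (hdiv p) (fun k => hdiv k p),
    divergence_divergence_eq_zero_of_antisymm (fun k r => contDiff_infty.1 (hS p k r) 2)
      (hanti p)]
  simp

theorem divergence_divergence_symDivergence_eq_zero (hS : ∀ p k r, ContDiff ℝ ∞ (S p k r))
    (hanti : ∀ p k r y, S p k r y = -S p r k y) :
    divergence (fun k => divergence fun p => symDivergence S p k) = 0 := by
  have hdiv : ∀ p k, ContDiff ℝ ∞ (divergence (S p k)) :=
    fun p k => contDiff_divergence (hS p k)
  simp only [symDivergence_comm S _ _, divergence_symDivergence hS hanti]
  rw [divergence_const_mul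
      fun k => (contDiff_divergence fun p => hdiv p k).differentiable (by simp),
    divergence_divergence_comm fun p k => contDiff_infty.1 (hdiv p k) 2]
  simp only [divergence_divergence_eq_zero_of_antisymm (fun k r => contDiff_infty.1 (hS _ k r) 2)
    (hanti _)]
  funext y
  simp [divergence, pd]

end SymmetrizedDivergence

section Representation

variable {D : ℕ} {i j : Fin D}

theorem exists_symDivergence_eq_of_divergence_eq_zero (hij : i ≠ j)
    {R : Fin D → Fin D → (Fin D → ℝ) → ℝ} (hR : ∀ p k, ContDiff ℝ ∞ (R p k))
    (hsym : ∀ p k y, R p k y = R k p y) (hdiv : ∀ p, divergence (R p) = 0) :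
    ∃ S : Fin D → Fin D → Fin D → (Fin D → ℝ) → ℝ, (∀ p k r, ContDiff ℝ ∞ (S p k r)) ∧
      (∀ p k r y, S p k r y = -S p r k y) ∧ ∀ p k, symDivergence S p k = R p k := by
  choose B hB hBanti hBdiv using fun p => exists_antisymm_divergence_eq hij (hR p) (hdiv p)
  refine ⟨B, hB, hBanti, fun p k => ?_⟩
  rw [symDivergence_eq fun p k r => (hB p k r).differentiable (by simp), hBdiv, hBdiv]
  funext y
  rw [hsym k p y]
  ring

theorem exists_divergence_symDivergence_eq (hij : i ≠ j) {J : Fin D → (Fin D → ℝ) → ℝ}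
    (hJ : ∀ p, ContDiff ℝ ∞ (J p)) (hdiv : divergence J = 0) :
    ∃ S : Fin D → Fin D → Fin D → (Fin D → ℝ) → ℝ, (∀ p k r, ContDiff ℝ ∞ (S p k r)) ∧
      (∀ p k r y, S p k r y = -S p r k y) ∧
      ∀ p, divergence (fun k => symDivergence S p k) = J p := by
  obtain ⟨A, hA, hAanti, hAdiv⟩ := exists_antisymm_divergence_eq hij hJ hdiv
  set Q : Fin D → Fin D → (Fin D → ℝ) → ℝ := fun p r => prim i (A p r)
  have hQ : ∀ p r, ContDiff ℝ ∞ (Q p r) := fun p r => contDiff_prim (hA p r) i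
  have hQanti : ∀ p r y, Q p r y = -Q r p y := fun p r y => by
    simp only [Q, funext (hAanti p r), prim_neg]
  have hS : ∀ k p r, ContDiff ℝ ∞ fun y => (if k = i then 2 else 0) * Q p r y :=
    fun k p r => contDiff_const.mul (hQ p r)
  have hSanti : ∀ k p r y,
      (if k = i then 2 else 0) * Q p r y = -((if k = i then 2 else 0) * Q r p y) :=
    fun k p r y => by rw [hQanti]; ring
  refine ⟨fun k p r y => (if k = i then 2 else 0) * Q p r y, hS, hSanti, fun p => ?_⟩
  have hpd_divQ : pd i (divergence (Q p)) = J p := funext fun y => by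
    rw [pd_divergence fun r => contDiff_infty.1 (hQ p r) 2, ← hAdiv]
    simp only [Q, funext (pd_prim_self (hA p _) i)]
  rw [divergence_symDivergence hS hSanti]
  simp only [divergence_const_mul fun r => (hQ p r).differentiable (by simp)]
  rw [divergence_ite_mul ((contDiff_divergence (hQ p)).differentiable (by simp)), hpd_divQ]
  funext y
  ring

theorem exists_symDivergence_eq (hij : i ≠ j) {R : Fin D → Fin D → (Fin D → ℝ) → ℝ}
    (hR : ∀ p k, ContDiff ℝ ∞ (R p k)) (hsym : ∀ p k y, R p k y = R k p y)
    (hdd : divergence (fun k => divergence fun p => R p k) = 0) :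
    ∃ S : Fin D → Fin D → Fin D → (Fin D → ℝ) → ℝ, (∀ p k r, ContDiff ℝ ∞ (S p k r)) ∧
      (∀ p k r y, S p k r y = -S p r k y) ∧ ∀ p k, symDivergence S p k = R p k := by
  have hJ : divergence (fun p => divergence (R p)) = 0 := by
    rw [← divergence_divergence_comm fun p k => contDiff_infty.1 (hR p k) 2, hdd]
  obtain ⟨S₀, hS₀, hS₀anti, hS₀div⟩ :=
    exists_divergence_symDivergence_eq hij (fun p => contDiff_divergence (hR p)) hJ
  have hC := contDiff_symDivergence hS₀
  obtain ⟨S₁, hS₁, hS₁anti, hS₁eq⟩ := exists_symDivergence_eq_of_divergence_eq_zero hij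
    (R := fun p k y => R p k y - symDivergence S₀ p k y) (fun p k => (hR p k).sub (hC p k))
    (fun p k y => by rw [hsym, symDivergence_comm])
    (fun p => by
      rw [divergence_sub (fun k => (hR p k).differentiable (by simp))
        (fun k => (hC p k).differentiable (by simp)), hS₀div]
      exact funext fun y => sub_self _)
  refine ⟨fun p k r y => S₀ p k r y + S₁ p k r y, fun p k r => (hS₀ p k r).add (hS₁ p k r),
    fun p k r y => ?_, fun p k => ?_⟩
  · change S₀ p k r y + S₁ p k r y = -(S₀ p r k y + S₁ p r k y)
    rw [hS₀anti, hS₁anti]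
    ring
  · rw [symDivergence_add (fun p k r => (hS₀ p k r).differentiable (by simp))
      (fun p k r => (hS₁ p k r).differentiable (by simp)), hS₁eq]
    funext y
    ring

end Representation

/-- Proposition 4, case D ≥ 3: a smooth symmetric tensor field R^{pk}
satisfies ∂_k∂_p R^{pk} = 0 iff R^{pk} = ∂_r S^{(pk)r} for some smooth S^{pkr} with
S^{pkr} = −S^{prk}. -/
theorem stmt_12 (D : ℕ) (hD : 3 ≤ D)
    (R : Fin D → Fin D → (Fin D → ℝ) → ℝ)
    (hsmooth : ∀ p k, ContDiff ℝ (⊤ : ℕ∞) (R p k))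
    (hsym : ∀ p k x, R p k x = R k p x) :
    (∀ x, ∑ k, ∑ p, pd k (pd p (R p k)) x = 0)
    ↔ ∃ S : Fin D → Fin D → Fin D → (Fin D → ℝ) → ℝ,
        (∀ p k r, ContDiff ℝ (⊤ : ℕ∞) (S p k r)) ∧
        (∀ p k r x, S p k r x = - S p r k x) ∧
        (∀ p k x, R p k x
          = ∑ r, pd r (fun y => (1/2 : ℝ) * (S p k r y + S k p r y)) x) := by
  simp only [← divergence_divergence_apply fun p k => contDiff_infty.1 (hsmooth p k) 2]
  constructor
  · intro hdd
    obtain ⟨S, hS, hanti, hrep⟩ := exists_symDivergence_eq (i := ⟨0, by omega⟩)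
      (j := ⟨1, by omega⟩) (by simp) hsmooth hsym (funext hdd)
    exact ⟨S, hS, hanti, fun p k x => (congrFun (hrep p k) x).symm⟩
  · rintro ⟨S, hS, hanti, hrep⟩
    obtain rfl : R = symDivergence S := funext₂ fun p k => funext (hrep p k)
    exact congrFun (divergence_divergence_symDivergence_eq_zero hS hanti)
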